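/- arXiv:2503.24170 — 2 statements merged into one kernel-verified Lean document; each statement's English description precedes it below -/
import Mathlib

section
/- Every intrinsically localized B(H)-valued sequence is a g-Bessel sequence. Precisely: let H be a separable complex Hilbert space, X a countable index set, and (T_k)_{k∈X} a family of bounded operators on H. If there exists a bounded operator G ∈ B(ℓ²(X;H)) whose (k,l) matrix entry equals T_k T_l* for all k,l ∈ X, then (T_k)_{k∈X} is a g-Bessel sequence; in fact ∑_{k∈X} ‖T_k f‖² ≤ ‖G‖_{B(ℓ²(X;H))} ‖f‖² for all f ∈ H. -/
/-!
Let `u = ∑_{l ∈ F} δ_l h_l`. The matrix entries of `G` give `⟪u, G u⟫ = ‖∑_{l ∈ F} T_l* h_l‖²`,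
so each finite synthesis operator `h ↦ ∑_{l ∈ F} T_l* h_l` has norm squared at most `‖G‖`.
Taking `h_l = T_l f` and `v = ∑_{k ∈ F} T_k* T_k f`, we get
`S := ∑_{k ∈ F} ‖T_k f‖² = re ⟪v, f⟫ ≤ ‖v‖ ‖f‖` together with `‖v‖² ≤ ‖G‖ S`, hence `S ≤ ‖G‖ ‖f‖²`
uniformly in `F`.
-/

open ContinuousLinearMap

namespace IntrinsicallyLocalized

variable {𝕜 X H K : Type*} [RCLike 𝕜] [DecidableEq X]
  [NormedAddCommGroup H] [InnerProductSpace 𝕜 H] [CompleteSpace H]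
  [NormedAddCommGroup K] [InnerProductSpace 𝕜 K] [CompleteSpace K]

def IsGramOperator (T : X → H →L[𝕜] K) (G : lp (fun _ : X => K) 2 →L[𝕜] lp (fun _ : X => K) 2) :
    Prop :=
  ∀ (k l : X) (h : K), (G (lp.single 2 l h)) k = T k (adjoint (T l) h)

variable {T : X → H →L[𝕜] K} {G : lp (fun _ : X => K) 2 →L[𝕜] lp (fun _ : X => K) 2}

theorem inner_sum_single_apply_eq
    (hG : IsGramOperator T G) (F : Finset X) (h : X → K) :
    inner 𝕜 (∑ l ∈ F, lp.single 2 l (h l)) (G (∑ l ∈ F, lp.single 2 l (h l)))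
      = inner 𝕜 (∑ l ∈ F, adjoint (T l) (h l)) (∑ l ∈ F, adjoint (T l) (h l)) := by
  simp only [map_sum, inner_sum, sum_inner, lp.inner_single_left]
  refine Finset.sum_congr rfl fun k _ => Finset.sum_congr rfl fun l _ => ?_
  rw [hG, adjoint_inner_left]

theorem norm_sum_adjoint_apply_sq_le
    (hG : IsGramOperator T G) (F : Finset X) (h : X → K) :
    ‖∑ l ∈ F, adjoint (T l) (h l)‖ ^ 2 ≤ ‖G‖ * ∑ l ∈ F, ‖h l‖ ^ 2 := by
  set u : lp (fun _ : X => K) 2 := ∑ l ∈ F, lp.single 2 l (h l)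
  have hu : ‖u‖ ^ 2 = ∑ l ∈ F, ‖h l‖ ^ 2 := by
    exact_mod_cast lp.norm_sum_single (p := 2) (by norm_num) h F
  calc ‖∑ l ∈ F, adjoint (T l) (h l)‖ ^ 2
      = RCLike.re (inner 𝕜 u (G u)) := by
        rw [inner_sum_single_apply_eq hG, inner_self_eq_norm_sq]
    _ ≤ ‖u‖ * ‖G u‖ := re_inner_le_norm _ _
    _ ≤ ‖u‖ * (‖G‖ * ‖u‖) := by gcongr; exact G.le_opNorm u
    _ = ‖G‖ * ∑ l ∈ F, ‖h l‖ ^ 2 := by rw [← hu]; ring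

theorem sum_norm_apply_sq_le
    (hG : IsGramOperator T G) (F : Finset X) (f : H) :
    ∑ k ∈ F, ‖T k f‖ ^ 2 ≤ ‖G‖ * ‖f‖ ^ 2 := by
  set S := ∑ k ∈ F, ‖T k f‖ ^ 2
  set v := ∑ k ∈ F, adjoint (T k) (T k f)
  have hS : S = RCLike.re (inner 𝕜 v f) := by
    simp only [S, v, sum_inner, map_sum, adjoint_inner_left, inner_self_eq_norm_sq]
  have hSv : S ≤ ‖v‖ * ‖f‖ := hS ▸ re_inner_le_norm v f
  have hvS : ‖v‖ ^ 2 ≤ ‖G‖ * S := norm_sum_adjoint_apply_sq_le hG F fun k => T k f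
  have hS0 : 0 ≤ S := Finset.sum_nonneg fun _ _ => sq_nonneg _
  have hS2 : S ^ 2 ≤ ‖G‖ * S * ‖f‖ ^ 2 :=
    calc S ^ 2 ≤ ‖v‖ ^ 2 * ‖f‖ ^ 2 := by rw [← mul_pow]; exact pow_le_pow_left₀ hS0 hSv 2
      _ ≤ ‖G‖ * S * ‖f‖ ^ 2 := by gcongr
  nlinarith [mul_nonneg (norm_nonneg G) (sq_nonneg ‖f‖)]

end IntrinsicallyLocalized

open IntrinsicallyLocalized in
theorem gBessel_of_intrinsically_localized_general
    {X : Type*} [DecidableEq X]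
    {H : Type*} [NormedAddCommGroup H] [InnerProductSpace ℂ H] [CompleteSpace H]
    (T : X → H →L[ℂ] H)
    (G : lp (fun _ : X => H) 2 →L[ℂ] lp (fun _ : X => H) 2)
    (hG : ∀ (k l : X) (h : H),
      (G (lp.single 2 l h)) k = T k ((ContinuousLinearMap.adjoint (T l)) h)) :
    ∀ f : H, Summable (fun k => ‖T k f‖ ^ 2) ∧
      ∑' k, ‖T k f‖ ^ 2 ≤ ‖G‖ * ‖f‖ ^ 2 := by
  intro f
  have hnonneg : 0 ≤ fun k => ‖T k f‖ ^ 2 := fun _ => sq_nonneg _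
  exact ⟨summable_of_sum_le hnonneg (sum_norm_apply_sq_le hG · f),
    Real.tsum_le_of_sum_le hnonneg (sum_norm_apply_sq_le hG · f)⟩

/-- **Every intrinsically localized `B(H)`-valued sequence is a g-Bessel sequence.**
Let `H` be a separable complex Hilbert space, `X` a countable index set and
`(T k)_{k ∈ X}` a family of bounded operators on `H`. If there is a bounded operator
`G` on `ℓ²(X;H)` whose `(k,l)` matrix entry (i.e. `h ↦ (G (δ_l h)) k`) equals
`T k ∘ (T l)*` for all `k, l`, then `∑ₖ ‖T k f‖² ≤ ‖G‖ ‖f‖²` for all `f ∈ H`;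
in particular `(T k)` is a g-Bessel sequence. -/
theorem gBessel_of_intrinsically_localized
    {X : Type*} [Countable X] [DecidableEq X]
    {H : Type*} [NormedAddCommGroup H] [InnerProductSpace ℂ H] [CompleteSpace H]
    [TopologicalSpace.SeparableSpace H]
    (T : X → H →L[ℂ] H)
    (G : lp (fun _ : X => H) 2 →L[ℂ] lp (fun _ : X => H) 2)
    (hG : ∀ (k l : X) (h : H),
      (G (lp.single 2 l h)) k = T k ((ContinuousLinearMap.adjoint (T l)) h)) :
    ∀ f : H, Summable (fun k => ‖T k f‖ ^ 2) ∧
      ∑' k, ‖T k f‖ ^ 2 ≤ ‖G‖ * ‖f‖ ^ 2 :=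
  gBessel_of_intrinsically_localized_general T G hG
end

section
/- Pseudo-inverse-closedness: let K be a complex Hilbert space, 𝒜 a star-subalgebra of B(K) equipped with a norm ‖·‖_𝒜 making 𝒜 a Banach *-algebra whose inclusion into B(K) is bounded, and assume 𝒜 is inverse-closed in B(K). If A ∈ 𝒜 has closed range, then its Moore–Penrose pseudo-inverse A† belongs to 𝒜. -/
/-!
Let `T = A*A`, `Q = A†A` (the orthogonal projection onto `(ker A)ᗮ`) and `S = T + c (1 - Q)` with
`c = ‖A‖² + 1`. Then `A† = S⁻¹ A*`, and `‖S - c‖ < c` because `ABA = A` bounds `A` below on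
`(ker A)ᗮ`. Only `T`, not `S`, is known to lie in `𝒜`; but `T = S Q` with `Q` commuting with `S`,
so `(z - T)⁻¹` and `(z - S)⁻¹` agree on the range of `A*`, and
`A† = (2πi)⁻¹ ∮ z⁻¹ (z - T)⁻¹ dz · A*` over a circle enclosing the spectrum of `S` but not `0`.
Inverse-closedness puts each `(z - T)⁻¹` in `𝒜`, and since `𝒜` is complete and continuously
included, so is the integral.
-/

open Metric Complex Real Filter Topology

section CircleIntegral

variable {E F : Type*} [NormedAddCommGroup E] [NormedSpace ℂ E] [CompleteSpace E]
  [NormedAddCommGroup F] [NormedSpace ℂ F] [CompleteSpace F] {c : ℂ} {R : ℝ}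

theorem ContinuousLinearMap.circleIntegral_comp_comm (L : E →L[ℂ] F) {f : ℂ → E}
    (hf : CircleIntegrable f c R) : ∮ z in C(c, R), L (f z) = L (∮ z in C(c, R), f z) := by
  simp only [circleIntegral, ← L.intervalIntegral_comp_comm hf.out, map_smul]

theorem circleIntegral_mul_const {X : Type*} [NormedRing X] [NormedAlgebra ℂ X] [CompleteSpace X]
    {f : ℂ → X} (hf : CircleIntegrable f c R) (y : X) :
    ∮ z in C(c, R), f z * y = (∮ z in C(c, R), f z) * y :=
  ((ContinuousLinearMap.mul ℂ X).flip y).circleIntegral_comp_comm hf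

end CircleIntegral

section Resolvent

variable {𝕜 A : Type*} [Field 𝕜] [Ring A] [Algebra 𝕜 A]

theorem resolvent_sub_inv_smul_one {a : A} {c z : 𝕜} (hz : z ∈ resolventSet 𝕜 a) (hzc : z ≠ c) :
    resolvent a z - (z - c)⁻¹ • (1 : A) = (z - c)⁻¹ • (resolvent a z * (a - algebraMap 𝕜 A c)) := by
  have hsplit : a - algebraMap 𝕜 A c = (z - c) • (1 : A) - (algebraMap 𝕜 A z - a) := by
    simp only [Algebra.algebraMap_eq_smul_one, sub_smul]
    abel
  have hinv : resolvent a z * (algebraMap 𝕜 A z - a) = 1 := Ring.inverse_mul_cancel _ hz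
  rw [hsplit, mul_sub, hinv, mul_smul_comm, mul_one, smul_sub, smul_smul,
    inv_mul_cancel₀ (sub_ne_zero.2 hzc), one_smul]

theorem resolvent_mul_of_isIdempotentElem {s q : A} (hq : IsIdempotentElem q) (hsq : Commute s q)
    {z : 𝕜} (hz : z ≠ 0) (hs : z ∈ resolventSet 𝕜 s) :
    z ∈ resolventSet 𝕜 (s * q) ∧ resolvent (s * q) z * q = resolvent s z * q := by
  have hu : Commute (algebraMap 𝕜 A z - s) q := (Algebra.commute_algebraMap_left z q).sub_left hsq
  set r := resolvent s z
  have hrq : Commute r q := by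
    rw [show r = ↑hs.unit⁻¹ from spectrum.resolvent_eq hs]
    exact hu.units_inv_left (u := hs.unit)
  have hr₁ : (algebraMap 𝕜 A z - s) * r = 1 := Ring.mul_inverse_cancel _ hs
  have hr₂ : r * (algebraMap 𝕜 A z - s) = 1 := Ring.inverse_mul_cancel _ hs
  have hrange : (algebraMap 𝕜 A z - s * q) * q = (algebraMap 𝕜 A z - s) * q := by
    rw [sub_mul, sub_mul, mul_assoc, hq.eq]
  have hker : (algebraMap 𝕜 A z - s * q) * (1 - q) = z • (1 - q) := by
    rw [sub_mul, mul_assoc, hq.mul_one_sub_self, mul_zero, sub_zero, Algebra.smul_def]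
  have hXq : Commute (algebraMap 𝕜 A z - s * q) q :=
    (Algebra.commute_algebraMap_left z q).sub_left (hsq.mul_left (Commute.refl q))
  set w := z⁻¹ • (1 - q) + r * q
  have hw₁ : (algebraMap 𝕜 A z - s * q) * w = 1 := by
    rw [mul_add, mul_smul_comm, hker, smul_smul, inv_mul_cancel₀ hz, one_smul, hrq.eq,
      ← mul_assoc, hrange, mul_assoc, ← hrq.eq, ← mul_assoc, hr₁, one_mul, sub_add_cancel]
  have hw₂ : w * (algebraMap 𝕜 A z - s * q) = 1 := by
    rw [add_mul, smul_mul_assoc, ← ((Commute.one_right _).sub_right hXq).eq, hker, smul_smul,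
      inv_mul_cancel₀ hz, one_smul, mul_assoc, ← hXq.eq, hrange, hu.eq, ← mul_assoc, hrq.eq,
      mul_assoc, hr₂, mul_one, sub_add_cancel]
  have hmem : z ∈ resolventSet 𝕜 (s * q) :=
    spectrum.mem_resolventSet_of_left_right_inverse hw₁ hw₂
  refine ⟨hmem, ?_⟩
  have hw : resolvent (s * q) z = w := by
    rw [spectrum.resolvent_eq hmem]
    exact Units.inv_eq_of_mul_eq_one_right hw₁
  rw [hw, add_mul, smul_mul_assoc, hq.one_sub_mul_self, smul_zero, zero_add, mul_assoc, hq.eq]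

variable {X : Type*} [NormedRing X] [NormedAlgebra ℂ X] {a : X}

theorem sphere_subset_resolventSet {c : ℂ} {R : ℝ} (ha : spectrum ℂ a ⊆ ball c R) :
    sphere c R ⊆ resolventSet ℂ a := fun _ hz ↦
  spectrum.notMem_iff.1 fun hσ ↦ (mem_ball.1 (ha hσ)).ne (mem_sphere.1 hz)

variable [CompleteSpace X]

theorem continuousOn_resolvent {s : Set ℂ} (hs : s ⊆ resolventSet ℂ a) :
    ContinuousOn (resolvent a) s := fun _ hz ↦
  (spectrum.hasDerivAt_resolvent_const_left (hs hz)).continuousAt.continuousWithinAt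

theorem exists_norm_resolvent_le (a : X) {ε : ℝ} (hε : 0 < ε) :
    ∃ M, ∀ z : ℂ, M ≤ ‖z‖ → ‖resolvent a z‖ ≤ ε := by
  have h := (spectrum.resolvent_tendsto_cobounded (𝕜 := ℂ) a).eventually (closedBall_mem_nhds 0 hε)
  rw [← comap_norm_atTop, eventually_comap, eventually_atTop] at h
  obtain ⟨M, hM⟩ := h
  exact ⟨M, fun z hz ↦ by simpa using hM ‖z‖ hz z rfl⟩

theorem differentiableAt_resolvent_sub_inv_smul_one {c z : ℂ} (hz : z ∈ resolventSet ℂ a)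
    (hzc : z ≠ c) : DifferentiableAt ℂ (fun z ↦ resolvent a z - (z - c)⁻¹ • (1 : X)) z :=
  (spectrum.hasDerivAt_resolvent_const_left hz).differentiableAt.sub
    (((differentiableAt_id.sub_const c).inv (sub_ne_zero.2 hzc)).smul_const _)

/-- Outside a disc containing the spectrum the integrand is holomorphic and `o(1/|z|)`, so its
integral over circles does not depend on the radius and tends to zero. -/
theorem circleIntegral_resolvent_sub_inv_smul_one {c : ℂ} {R : ℝ} (hR : 0 < R)
    (ha : spectrum ℂ a ⊆ ball c R) :
    ∮ z in C(c, R), (resolvent a z - (z - c)⁻¹ • (1 : X)) = 0 := by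
  have hres : ∀ z, R ≤ ‖z - c‖ → z ∈ resolventSet ℂ a := fun z hz ↦
    spectrum.notMem_iff.1 fun hσ ↦ hz.not_gt (mem_ball_iff_norm.1 (ha hσ))
  have hne : ∀ z, R ≤ ‖z - c‖ → z ≠ c := fun z hz h ↦ by
    rw [h, sub_self, norm_zero] at hz; linarith
  have hdiff : ∀ z, R ≤ ‖z - c‖ →
      DifferentiableAt ℂ (fun z ↦ resolvent a z - (z - c)⁻¹ • (1 : X)) z := fun z hz ↦
    differentiableAt_resolvent_sub_inv_smul_one (hres z hz) (hne z hz)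
  have hsmall : ∀ ε > 0, ‖∮ z in C(c, R), (resolvent a z - (z - c)⁻¹ • (1 : X))‖ ≤
      2 * π * ‖a - algebraMap ℂ X c‖ * ε := by
    intro ε hε
    obtain ⟨M, hM⟩ := exists_norm_resolvent_le a hε
    set R' := max R (M + ‖c‖)
    have hR'0 : 0 < R' := hR.trans_le (le_max_left _ _)
    rw [← Complex.circleIntegral_eq_of_differentiable_on_annulus_off_countable hR
      (le_max_left R (M + ‖c‖)) Set.countable_empty
      (fun z hz ↦ (hdiff z (by simpa [dist_eq_norm] using hz.2)).continuousAt.continuousWithinAt)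
      (fun z hz ↦ hdiff z (by simpa [dist_eq_norm] using hz.1.2 : R < ‖z - c‖).le)]
    have hbound : ∀ z ∈ sphere c R', ‖resolvent a z - (z - c)⁻¹ • (1 : X)‖ ≤
        R'⁻¹ * (ε * ‖a - algebraMap ℂ X c‖) := by
      intro z hz
      rw [mem_sphere_iff_norm] at hz
      have hzR : R ≤ ‖z - c‖ := hz ▸ le_max_left _ _
      have hzM : M ≤ ‖z‖ := by linarith [norm_sub_le z c, le_max_right R (M + ‖c‖)]
      rw [resolvent_sub_inv_smul_one (hres z hzR) (hne z hzR), norm_smul, norm_inv, hz]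
      gcongr
      exact (norm_mul_le _ _).trans (by gcongr; exact hM z hzM)
    calc _ ≤ 2 * π * R' * (R'⁻¹ * (ε * ‖a - algebraMap ℂ X c‖)) :=
          circleIntegral.norm_integral_le_of_norm_le_const hR'0.le hbound
      _ = 2 * π * ‖a - algebraMap ℂ X c‖ * ε := by field_simp
  refine norm_le_zero_iff.1 (ge_of_tendsto (x := 𝓝[>] (0 : ℝ)) ?_
    (eventually_nhdsWithin_of_forall hsmall))
  simpa using ((continuous_const_mul (2 * π * ‖a - algebraMap ℂ X c‖)).tendsto 0).mono_left
    nhdsWithin_le_nhds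

theorem circleIntegral_resolvent {c : ℂ} {R : ℝ} (hR : 0 < R) (ha : spectrum ℂ a ⊆ ball c R) :
    ∮ z in C(c, R), resolvent a z = (2 * π * I) • (1 : X) := by
  have hinv : ContinuousOn (fun z ↦ (z - c)⁻¹) (sphere c R) :=
    (continuousOn_id.sub continuousOn_const).inv₀ fun z hz h ↦
      hR.ne' (by rw [← mem_sphere_iff_norm.1 hz]; simpa [sub_eq_zero] using h)
  have hf : CircleIntegrable (resolvent a) c R :=
    (continuousOn_resolvent (sphere_subset_resolventSet ha)).circleIntegrable hR.le
  have hg : CircleIntegrable (fun z ↦ (z - c)⁻¹ • (1 : X)) c R :=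
    (hinv.smul continuousOn_const).circleIntegrable hR.le
  have h := circleIntegral_resolvent_sub_inv_smul_one hR ha
  rwa [circleIntegral.integral_sub hf hg, sub_eq_zero, circleIntegral.integral_smul_const,
    circleIntegral.integral_sub_center_inv c hR.ne'] at h

theorem circleIntegral_inv_smul_resolvent {c : ℂ} {R : ℝ} (hR : 0 < R)
    (ha : spectrum ℂ a ⊆ ball c R) (h0 : (0 : ℂ) ∉ closedBall c R) :
    ∮ z in C(c, R), z⁻¹ • resolvent a z = (2 * π * I) • Ring.inverse a := by
  have hunit : IsUnit a :=
    (spectrum.zero_notMem_iff ℂ).1 fun h ↦ h0 (ball_subset_closedBall (ha h))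
  have hsph := sphere_subset_resolventSet ha
  have hz0 : ∀ z ∈ sphere c R, z ≠ 0 := fun z hz h ↦ h0 (h ▸ sphere_subset_closedBall hz)
  have hpf : Set.EqOn (fun z ↦ z⁻¹ • resolvent a z)
      (fun z ↦ (resolvent a z - z⁻¹ • (1 : X)) * Ring.inverse a) (sphere c R) := fun z hz ↦ by
    have h := resolvent_sub_inv_smul_one (c := 0) (hsph hz) (hz0 z hz)
    simp only [sub_zero, map_zero] at h
    simp only [h, smul_mul_assoc, mul_assoc, Ring.mul_inverse_cancel _ hunit, mul_one]
  have hinv : ∮ z in C(c, R), z⁻¹ = 0 :=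
    circleIntegral_eq_zero_of_differentiable_on_off_countable hR.le Set.countable_empty
      (continuousOn_inv₀.mono fun z hz h ↦ h0 (h ▸ hz))
      fun z hz ↦ differentiableAt_inv fun h ↦ h0 (h ▸ ball_subset_closedBall hz.1)
  have hf : CircleIntegrable (resolvent a) c R :=
    (continuousOn_resolvent hsph).circleIntegrable hR.le
  have hg : CircleIntegrable (fun z ↦ z⁻¹ • (1 : X)) c R :=
    ((continuousOn_inv₀.mono hz0).smul continuousOn_const).circleIntegrable hR.le
  rw [circleIntegral.integral_congr hR.le hpf,
    circleIntegral_mul_const (f := fun z ↦ resolvent a z - z⁻¹ • (1 : X)) (hf.sub hg),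
    circleIntegral.integral_sub hf hg, circleIntegral_resolvent hR ha,
    circleIntegral.integral_smul_const, hinv, zero_smul, sub_zero, smul_mul_assoc, one_mul]

end Resolvent

section InverseClosed

def IsInverseClosed {F R S : Type*} [Monoid R] [Monoid S] [FunLike F R S] (f : F) : Prop :=
  ∀ a b, f a * b = 1 → b * f a = 1 → b ∈ Set.range f

theorem IsInverseClosed.isUnit_of_isUnit_apply {F R S : Type*} [Monoid R] [Monoid S]
    [FunLike F R S] [MonoidHomClass F R S] {f : F} (hcl : IsInverseClosed f)
    (hf : Function.Injective f) {a : R} (ha : IsUnit (f a)) : IsUnit a := by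
  obtain ⟨u, hu⟩ := ha
  obtain ⟨b, hb⟩ := hcl a ↑u⁻¹ (by rw [← hu, u.mul_inv]) (by rw [← hu, u.inv_mul])
  refine ⟨⟨a, b, hf ?_, hf ?_⟩, rfl⟩
  · rw [map_mul, hb, ← hu, u.mul_inv, map_one]
  · rw [map_mul, hb, ← hu, u.inv_mul, map_one]

variable {𝕜 A B F : Type*} [CommSemiring 𝕜] [Ring A] [Ring B] [Algebra 𝕜 A] [Algebra 𝕜 B]
  [FunLike F A B] [AlgHomClass F 𝕜 A B]

theorem IsInverseClosed.mem_resolventSet_of_apply {f : F} (hcl : IsInverseClosed f)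
    (hf : Function.Injective f) {a : A} {r : 𝕜} (h : r ∈ resolventSet 𝕜 (f a)) :
    r ∈ resolventSet 𝕜 a := by
  rw [spectrum.mem_resolventSet_iff, ← AlgHomClass.commutes f r, ← map_sub] at h
  exact hcl.isUnit_of_isUnit_apply hf h

theorem AlgHom.map_resolvent (φ : F) {a : A} {r : 𝕜} (h : r ∈ resolventSet 𝕜 a) :
    φ (resolvent a r) = resolvent (φ a) r := by
  rw [spectrum.resolvent_eq h, spectrum.resolvent_eq (AlgHom.mem_resolventSet_apply φ h), eq_comm]
  apply Units.inv_eq_of_mul_eq_one_right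
  show (algebraMap 𝕜 B r - φ a) * φ ↑h.unit⁻¹ = 1
  rw [← AlgHomClass.commutes φ r, ← map_sub, ← map_mul, h.mul_val_inv, map_one]

theorem IsInverseClosed.map_circleIntegral_smul_resolvent {𝔄 X G : Type*} [NormedRing 𝔄]
    [NormedAlgebra ℂ 𝔄] [CompleteSpace 𝔄] [NormedRing X] [NormedAlgebra ℂ X] [CompleteSpace X]
    [FunLike G 𝔄 X] [AlgHomClass G ℂ 𝔄 X] {ι : G} (hcl : IsInverseClosed ι)
    (hinj : Function.Injective ι) (hcont : Continuous ι) {t : 𝔄} {f : ℂ → ℂ} {c : ℂ} {R : ℝ}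
    (hR : 0 ≤ R) (hf : ContinuousOn f (sphere c R)) (hsph : sphere c R ⊆ resolventSet ℂ (ι t)) :
    ι (∮ z in C(c, R), f z • resolvent t z) = ∮ z in C(c, R), f z • resolvent (ι t) z := by
  have hsph' : sphere c R ⊆ resolventSet ℂ t := fun z hz ↦
    hcl.mem_resolventSet_of_apply hinj (hsph hz)
  let L : 𝔄 →L[ℂ] X := ⟨(AlgHomClass.toAlgHom ι).toLinearMap, hcont⟩
  have hint : CircleIntegrable (fun z ↦ f z • resolvent t z) c R :=
    (hf.smul (continuousOn_resolvent hsph')).circleIntegrable hR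
  refine (L.circleIntegral_comp_comm hint).symm.trans
    (circleIntegral.integral_congr hR fun z hz ↦ ?_)
  rw [← AlgHom.map_resolvent ι (hsph' hz), ← map_smul]
  rfl

end InverseClosed

section MoorePenrose

variable {𝕜 E : Type*} [RCLike 𝕜] [NormedAddCommGroup E] [InnerProductSpace 𝕜 E]

structure IsMoorePenroseInverse (A B : E →L[𝕜] E) : Prop where
  ker_eq : LinearMap.ker (B : E →ₗ[𝕜] E) = (LinearMap.range (A : E →ₗ[𝕜] E))ᗮ
  range_eq : LinearMap.range (B : E →ₗ[𝕜] E) = (LinearMap.ker (A : E →ₗ[𝕜] E))ᗮ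
  mul_mul_self : A * B * A = A

namespace IsMoorePenroseInverse

variable {A B : E →L[𝕜] E}

theorem apply_apply_apply (h : IsMoorePenroseInverse A B) (x : E) : A (B (A x)) = A x :=
  DFunLike.congr_fun h.mul_mul_self x

theorem eq_zero_of_mem_range_of_apply_eq_zero (h : IsMoorePenroseInverse A B) {x : E}
    (hx : x ∈ LinearMap.range (B : E →ₗ[𝕜] E)) (hAx : A x = 0) : x = 0 :=
  Submodule.disjoint_def.1 (Submodule.orthogonal_disjoint _) x hAx (h.range_eq ▸ hx)

theorem mul_mul_self_symm (h : IsMoorePenroseInverse A B) : B * A * B = B := by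
  refine ContinuousLinearMap.ext fun x ↦ sub_eq_zero.1 <| h.eq_zero_of_mem_range_of_apply_eq_zero
    ⟨A (B x) - x, by simp⟩ ?_
  simp [h.apply_apply_apply]

end IsMoorePenroseInverse

variable [CompleteSpace E]

theorem isSelfAdjoint_of_isIdempotentElem_of_isOrtho {P : E →L[𝕜] E} (hP : IsIdempotentElem P)
    (h : LinearMap.range (P : E →ₗ[𝕜] E) ⟂ LinearMap.ker (P : E →ₗ[𝕜] E)) : IsSelfAdjoint P :=
  ContinuousLinearMap.isSelfAdjoint_iff_isSymmetric.2
    (LinearMap.IsIdempotentElem.isSymmetric_iff_isOrtho_range_ker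
      (ContinuousLinearMap.IsIdempotentElem.toLinearMap hP) |>.2 h)

theorem norm_star_mul_self_apply_sub_smul_sq_le (A : E →L[𝕜] E) {c δ : ℝ} (hc : ‖A‖ ^ 2 ≤ c)
    {y : E} (hy : δ * ‖y‖ ^ 2 ≤ ‖A y‖ ^ 2) :
    ‖(star A * A) y - (c : 𝕜) • y‖ ^ 2 ≤ c * (c - δ) * ‖y‖ ^ 2 := by
  have hinner : RCLike.re (inner 𝕜 ((star A * A) y) ((c : 𝕜) • y)) = c * ‖A y‖ ^ 2 := by
    rw [inner_smul_right, ContinuousLinearMap.star_eq_adjoint, mul_apply_eq_comp,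
      ContinuousLinearMap.adjoint_inner_left, inner_self_eq_norm_sq_to_K, ← RCLike.ofReal_pow,
      ← RCLike.ofReal_mul, RCLike.ofReal_re]
  have hT : ‖(star A * A) y‖ ≤ ‖A‖ * ‖A y‖ := by
    have := (ContinuousLinearMap.adjoint A).le_opNorm (A y)
    rwa [LinearIsometryEquiv.norm_map] at this
  have hTc : ‖(star A * A) y‖ ^ 2 ≤ c * ‖A y‖ ^ 2 :=
    calc ‖(star A * A) y‖ ^ 2 ≤ (‖A‖ * ‖A y‖) ^ 2 := by gcongr
      _ ≤ c * ‖A y‖ ^ 2 := by rw [mul_pow]; gcongr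
  have hc0 : 0 ≤ c := (sq_nonneg _).trans hc
  rw [@norm_sub_sq 𝕜, hinner, norm_smul, RCLike.norm_ofReal, abs_of_nonneg hc0]
  nlinarith

/-- When `B = A†`, `1 - B * A` is the orthogonal projection onto `ker A`. -/
noncomputable def shiftedGram (A B : E →L[𝕜] E) (c : 𝕜) : E →L[𝕜] E :=
  star A * A + c • (1 - B * A)

namespace IsMoorePenroseInverse

variable {A B : E →L[𝕜] E}

theorem isStarProjection_mul (h : IsMoorePenroseInverse A B) : IsStarProjection (B * A) := by
  have hidem : IsIdempotentElem (B * A) := by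
    rw [IsIdempotentElem, mul_assoc, ← mul_assoc A, h.mul_mul_self]
  refine ⟨hidem, isSelfAdjoint_of_isIdempotentElem_of_isOrtho hidem ?_⟩
  refine (Submodule.isOrtho_orthogonal_left (LinearMap.ker (A : E →ₗ[𝕜] E))).mono ?_ ?_
  · rw [← h.range_eq]
    rintro _ ⟨x, rfl⟩
    exact ⟨A x, rfl⟩
  · intro x (hx : B (A x) = 0)
    simpa [hx] using (h.apply_apply_apply x).symm

theorem isSelfAdjoint_mul (h : IsMoorePenroseInverse A B) : IsSelfAdjoint (A * B) := by
  have hidem : IsIdempotentElem (A * B) := by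
    rw [IsIdempotentElem, ← mul_assoc, h.mul_mul_self]
  refine isSelfAdjoint_of_isIdempotentElem_of_isOrtho hidem
    ((Submodule.isOrtho_orthogonal_right (LinearMap.range (A : E →ₗ[𝕜] E))).mono ?_ ?_)
  · rintro _ ⟨x, rfl⟩
    exact ⟨B x, rfl⟩
  · intro x (hx : A (B x) = 0)
    rw [← h.ker_eq]
    exact h.eq_zero_of_mem_range_of_apply_eq_zero ⟨x, rfl⟩ hx

theorem star_mul_self_mul_mul (h : IsMoorePenroseInverse A B) :
    star A * A * (B * A) = star A * A := by
  rw [mul_assoc, ← mul_assoc A, h.mul_mul_self]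

theorem mul_mul_star_mul_self (h : IsMoorePenroseInverse A B) :
    B * A * (star A * A) = star A * A := by
  simpa [star_mul, h.isStarProjection_mul.isSelfAdjoint.star_eq, mul_assoc] using
    congrArg star h.star_mul_self_mul_mul

theorem mul_mul_star (h : IsMoorePenroseInverse A B) : B * A * star A = star A := by
  simpa [star_mul, h.isStarProjection_mul.isSelfAdjoint.star_eq, mul_assoc] using
    congrArg star h.mul_mul_self

theorem star_mul_self_mul (h : IsMoorePenroseInverse A B) : star A * A * B = star A := by
  rw [mul_assoc, ← h.isSelfAdjoint_mul.star_eq, ← star_mul, h.mul_mul_self]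

theorem shiftedGram_mul_mul (h : IsMoorePenroseInverse A B) (c : 𝕜) :
    shiftedGram A B c * (B * A) = star A * A := by
  rw [shiftedGram, add_mul, smul_mul_assoc,
    h.isStarProjection_mul.isIdempotentElem.one_sub_mul_self, smul_zero, add_zero,
    h.star_mul_self_mul_mul]

theorem commute_shiftedGram (h : IsMoorePenroseInverse A B) (c : 𝕜) :
    Commute (shiftedGram A B c) (B * A) := by
  rw [Commute, SemiconjBy, h.shiftedGram_mul_mul, shiftedGram, mul_add, mul_smul_comm,
    h.isStarProjection_mul.isIdempotentElem.mul_one_sub_self, smul_zero, add_zero,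
    h.mul_mul_star_mul_self]

theorem shiftedGram_mul (h : IsMoorePenroseInverse A B) (c : 𝕜) :
    shiftedGram A B c * B = star A := by
  rw [shiftedGram, add_mul, smul_mul_assoc, sub_mul, one_mul, h.mul_mul_self_symm, sub_self,
    smul_zero, add_zero, h.star_mul_self_mul]

theorem resolvent_star_mul_self_mul_star (h : IsMoorePenroseInverse A B) {c z : 𝕜} (hz : z ≠ 0)
    (hS : z ∈ resolventSet 𝕜 (shiftedGram A B c)) :
    z ∈ resolventSet 𝕜 (star A * A) ∧
      resolvent (star A * A) z * star A = resolvent (shiftedGram A B c) z * star A := by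
  have h' := resolvent_mul_of_isIdempotentElem h.isStarProjection_mul.isIdempotentElem
    (h.commute_shiftedGram c) hz hS
  rw [h.shiftedGram_mul_mul] at h'
  refine ⟨h'.1, ?_⟩
  calc resolvent (star A * A) z * star A = resolvent (star A * A) z * (B * A) * star A := by
        rw [mul_assoc, h.mul_mul_star]
    _ = resolvent (shiftedGram A B c) z * star A := by rw [h'.2, mul_assoc, h.mul_mul_star]

/-- `A*A` is bounded above by `‖A‖²`, and on `(ker A)ᗮ` below by `(‖B‖² + 1)⁻¹` since
`y = B (A y)` there. -/
theorem exists_norm_shiftedGram_sub_lt (h : IsMoorePenroseInverse A B) :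
    ∃ c : ℝ, 0 < c ∧ ‖shiftedGram A B c - algebraMap 𝕜 (E →L[𝕜] E) c‖ < c := by
  set c : ℝ := ‖A‖ ^ 2 + 1
  set δ : ℝ := (‖B‖ ^ 2 + 1)⁻¹
  have hc : 0 < c := by positivity
  have hδ : δ ≤ c := (inv_le_one_of_one_le₀ (by simp [add_comm])).trans (by simp [c])
  have hcδ : 0 ≤ c * (c - δ) := mul_nonneg hc.le (sub_nonneg.2 hδ)
  have hbound : ∀ x, ‖(shiftedGram A B c - algebraMap 𝕜 _ c) x‖ ≤ √(c * (c - δ)) * ‖x‖ := by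
    intro x
    set y := (B * A) x
    have hVx : (shiftedGram A B c - algebraMap 𝕜 _ c) x = (star A * A) y - (c : 𝕜) • y := by
      have := DFunLike.congr_fun h.star_mul_self_mul_mul x
      simp only [mul_apply_eq_comp] at this
      simp [shiftedGram, Algebra.algebraMap_eq_smul_one, y, this, smul_sub]
      abel
    have hAy : A y = A x := h.apply_apply_apply x
    have hy : δ * ‖y‖ ^ 2 ≤ ‖A y‖ ^ 2 := by
      rw [hAy, inv_mul_le_iff₀ (by positivity)]
      calc ‖y‖ ^ 2 ≤ (‖B‖ * ‖A x‖) ^ 2 := by gcongr; exact B.le_opNorm (A x)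
        _ ≤ (‖B‖ ^ 2 + 1) * ‖A x‖ ^ 2 := by nlinarith [sq_nonneg ‖A x‖]
    have hyx : ‖y‖ ≤ ‖x‖ := ((B * A).le_opNorm x).trans
      (mul_le_of_le_one_left (norm_nonneg x) h.isStarProjection_mul.norm_le)
    rw [hVx, ← Real.sqrt_sq (norm_nonneg x), ← Real.sqrt_mul hcδ,
      Real.le_sqrt (norm_nonneg _) (mul_nonneg hcδ (sq_nonneg _))]
    calc ‖(star A * A) y - (c : 𝕜) • y‖ ^ 2 ≤ c * (c - δ) * ‖y‖ ^ 2 :=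
          norm_star_mul_self_apply_sub_smul_sq_le A (by simp [c]) hy
      _ ≤ c * (c - δ) * ‖x‖ ^ 2 := by gcongr
  refine ⟨c, hc, (ContinuousLinearMap.opNorm_le_bound _ (Real.sqrt_nonneg _) hbound).trans_lt ?_⟩
  rw [Real.sqrt_lt' hc]
  nlinarith [show 0 < δ by positivity]

end IsMoorePenroseInverse

end MoorePenrose

namespace IsMoorePenroseInverse

variable {E : Type*} [NormedAddCommGroup E] [InnerProductSpace ℂ E] [CompleteSpace E]
  {A B : E →L[ℂ] E}

theorem exists_spectrum_shiftedGram_subset_ball (h : IsMoorePenroseInverse A B) :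
    ∃ (c : ℂ) (R : ℝ), 0 < R ∧ spectrum ℂ (shiftedGram A B c) ⊆ ball c R ∧
      (0 : ℂ) ∉ closedBall c R := by
  obtain ⟨c, hc, hnorm⟩ := h.exists_norm_shiftedGram_sub_lt
  set S := shiftedGram A B (c : ℂ)
  set d := ‖S - algebraMap ℂ (E →L[ℂ] E) (c : ℂ)‖
  have hd : 0 ≤ d := norm_nonneg _
  replace hnorm : d < c := hnorm
  refine ⟨c, (d + c) / 2, by linarith, fun z hz ↦ ?_, ?_⟩
  · have hz' : z - c ∈ spectrum ℂ (S - algebraMap ℂ (E →L[ℂ] E) (c : ℂ)) :=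
      spectrum.sub_singleton_eq S (c : ℂ) ▸ Set.sub_mem_sub hz rfl
    rw [mem_ball, dist_eq_norm]
    calc ‖z - c‖ ≤ d * ‖(1 : E →L[ℂ] E)‖ := spectrum.norm_le_norm_mul_of_mem hz'
      _ ≤ d := mul_le_of_le_one_right hd ContinuousLinearMap.norm_id_le
      _ < (d + c) / 2 := by linarith
  · rw [mem_closedBall, dist_zero_left, norm_real, Real.norm_of_nonneg hc.le, not_le]
    linarith

theorem exists_circleIntegral_eq (h : IsMoorePenroseInverse A B) :
    ∃ (c : ℂ) (R : ℝ), 0 < R ∧ sphere c R ⊆ resolventSet ℂ (star A * A) ∧ (0 : ℂ) ∉ sphere c R ∧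
      (2 * π * I)⁻¹ • (∮ z in C(c, R), z⁻¹ • resolvent (star A * A) z) * star A = B := by
  obtain ⟨c, R, hR, hspec, h0⟩ := h.exists_spectrum_shiftedGram_subset_ball
  set S := shiftedGram A B c
  have hz0 : ∀ z ∈ sphere c R, z ≠ 0 := fun z hz h' ↦ h0 (h' ▸ sphere_subset_closedBall hz)
  have hres : ∀ z ∈ sphere c R, z ∈ resolventSet ℂ (star A * A) ∧
      resolvent (star A * A) z * star A = resolvent S z * star A := fun z hz ↦
    h.resolvent_star_mul_self_mul_star (hz0 z hz) (sphere_subset_resolventSet hspec hz)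
  have hinv : ContinuousOn (fun z : ℂ ↦ z⁻¹) (sphere c R) := continuousOn_inv₀.mono hz0
  have hintT : CircleIntegrable (fun z ↦ z⁻¹ • resolvent (star A * A) z) c R :=
    (hinv.smul (continuousOn_resolvent fun z hz ↦ (hres z hz).1)).circleIntegrable hR.le
  have hintS : CircleIntegrable (fun z ↦ z⁻¹ • resolvent S z) c R :=
    (hinv.smul (continuousOn_resolvent (sphere_subset_resolventSet hspec))).circleIntegrable hR.le
  have hSunit : IsUnit S :=
    (spectrum.zero_notMem_iff ℂ).1 fun h' ↦ h0 (ball_subset_closedBall (hspec h'))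
  refine ⟨c, R, hR, fun z hz ↦ (hres z hz).1, fun h' ↦ h0 (sphere_subset_closedBall h'), ?_⟩
  calc (2 * π * I)⁻¹ • (∮ z in C(c, R), z⁻¹ • resolvent (star A * A) z) * star A
      = (2 * π * I)⁻¹ • ∮ z in C(c, R), z⁻¹ • resolvent (star A * A) z * star A := by
        rw [smul_mul_assoc, ← circleIntegral_mul_const hintT]
    _ = (2 * π * I)⁻¹ • ∮ z in C(c, R), z⁻¹ • resolvent S z * star A := by
        congr 1
        exact circleIntegral.integral_congr hR.le fun z hz ↦ by
          simp only [smul_mul_assoc, (hres z hz).2]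
    _ = Ring.inverse S * star A := by
        rw [circleIntegral_mul_const hintS, circleIntegral_inv_smul_resolvent hR hspec h0,
          ← smul_mul_assoc, smul_smul, inv_mul_cancel₀ two_pi_I_ne_zero, one_smul]
    _ = B := by
        rw [← h.shiftedGram_mul c, ← mul_assoc, Ring.inverse_mul_cancel _ hSunit, one_mul]

end IsMoorePenroseInverse

theorem pseudoInverse_closed_of_inverseClosed_general
    {K : Type*} [NormedAddCommGroup K] [InnerProductSpace ℂ K] [CompleteSpace K]
    {𝔄 : Type*} [NormedRing 𝔄] [StarRing 𝔄] [NormedAlgebra ℂ 𝔄] [CompleteSpace 𝔄]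
    (ι : 𝔄 →⋆ₐ[ℂ] (K →L[ℂ] K))
    (hinj : Function.Injective ι)
    (hbdd : ∃ c : ℝ, ∀ a : 𝔄, ‖ι a‖ ≤ c * ‖a‖)
    (hinvcl : ∀ (a : 𝔄) (B : K →L[ℂ] K),
      (ι a) ∘L B = 1 → B ∘L (ι a) = 1 → B ∈ Set.range ι)
    (A : K →L[ℂ] K) (hA : A ∈ Set.range ι) :
    ∀ B : K →L[ℂ] K,
      LinearMap.ker (B : K →ₗ[ℂ] K) = (LinearMap.range (A : K →ₗ[ℂ] K))ᗮ →
      LinearMap.range (B : K →ₗ[ℂ] K) = (LinearMap.ker (A : K →ₗ[ℂ] K))ᗮ →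
      A ∘L B ∘L A = A →
      B ∈ Set.range ι := by
  intro B hker hrange hABA
  obtain ⟨a, rfl⟩ := hA
  have hMP : IsMoorePenroseInverse (ι a) B := ⟨hker, hrange, by rw [mul_assoc]; exact hABA⟩
  obtain ⟨C, hC⟩ := hbdd
  have hcont : Continuous ι := AddMonoidHomClass.continuous_of_bound ι C hC
  obtain ⟨c, R, hR, hsph, h0, hB⟩ := hMP.exists_circleIntegral_eq
  rw [← map_star, ← map_mul] at hsph hB
  refine ⟨(2 * π * I)⁻¹ • (∮ z in C(c, R), z⁻¹ • resolvent (star a * a) z) * star a, ?_⟩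
  rw [map_mul, map_smul, IsInverseClosed.map_circleIntegral_smul_resolvent (ι := ι)
    hinvcl hinj hcont hR.le (continuousOn_inv₀.mono fun z hz hz0 ↦ h0 (hz0 ▸ hz)) hsph, hB]

/-- **Pseudo-inverse-closedness.** Let `K` be a complex Hilbert space and `𝒜` a Banach
*-algebra realized as a *-subalgebra of `B(K)` via an injective, bounded, unital
*-algebra homomorphism `ι` (so `A ∈ 𝒜` is encoded as `A ∈ Set.range ι`), and assume
`𝒜` is inverse-closed in `B(K)`. If `A ∈ 𝒜` has closed range, then the Moore–Penrose
pseudo-inverse `A†` of `A` (characterized by `ker A† = (ran A)ᗮ`,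
`ran A† = (ker A)ᗮ`, `A A† A = A`) belongs to `𝒜`. -/
theorem pseudoInverse_closed_of_inverseClosed
    {K : Type*} [NormedAddCommGroup K] [InnerProductSpace ℂ K] [CompleteSpace K]
    {𝔄 : Type*} [NormedRing 𝔄] [StarRing 𝔄] [NormedAlgebra ℂ 𝔄] [CompleteSpace 𝔄]
    (ι : 𝔄 →⋆ₐ[ℂ] (K →L[ℂ] K))
    (hinj : Function.Injective ι)
    (hbdd : ∃ c : ℝ, ∀ a : 𝔄, ‖ι a‖ ≤ c * ‖a‖)
    (hinvcl : ∀ (a : 𝔄) (B : K →L[ℂ] K),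
      (ι a) ∘L B = 1 → B ∘L (ι a) = 1 → B ∈ Set.range ι)
    (A : K →L[ℂ] K) (hA : A ∈ Set.range ι)
    (hclosed : IsClosed (Set.range A)) :
    ∀ B : K →L[ℂ] K,
      LinearMap.ker (B : K →ₗ[ℂ] K) = (LinearMap.range (A : K →ₗ[ℂ] K))ᗮ →
      LinearMap.range (B : K →ₗ[ℂ] K) = (LinearMap.ker (A : K →ₗ[ℂ] K))ᗮ →
      A ∘L B ∘L A = A →
      B ∈ Set.range ι :=
  pseudoInverse_closed_of_inverseClosed_general ι hinj hbdd hinvcl A hA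
end
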